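/- Let 1 ≤ p < ∞ and let θ be a radial weight function of exponential growth rate η ≥ 0 with constant C_θ. Then for every t > 0 and every measurable v : ℝ^d → ℂ with ‖v‖_{L^p_θ} < ∞, the integral defining [T(t)v](x) converges absolutely for almost every x ∈ ℝ^d and ‖T(t)v‖_{L^p_θ} ≤ C₄(t) · ‖v‖_{L^p_θ}, where C₄(t) := C_θ · a₁^{d/2} · e^{−b₀ t} · (I_{d−1}(νt))^{1/p} with ν := |α|²η²p²/Re α. -/

import Mathlib

/-!
The modulus of `H(x, ξ, t)` is a Gaussian in `e^{tS}x - ξ`, and `e^{tS}` is a rotation because `S`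
is skew-symmetric. As `θ` is radial, `θ(x) = θ(e^{tS}x) ≤ C_θ θ(ξ) e^{η|e^{tS}x - ξ|}`, so
`θ(x) |T(t)v(x)|` is bounded by the convolution of `w = θ|v|` with the kernel `g e^{η|·|}`,
`g = C_θ |H|`, evaluated at `e^{tS}x`. Hölder's inequality for the measure `g(y - ξ) dξ` and Tonelli
give Young's inequality `‖(g e^{η|·|}) ⋆ w‖_p^p ≤ ‖g‖_1^{p-1} ‖g e^{pη|·|}‖_1 ‖w‖_p^p`, and the two
Gaussian moments, computed in polar coordinates, are `I_{d-1}(0) = 1` and `I_{d-1}(νt)` times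
`C_θ a₁^{d/2} e^{-b₀t}`.
-/

open MeasureTheory

/-- Rotation `e^{tS}x` given by the matrix exponential. -/
noncomputable def ouRot (d : ℕ) (S : Matrix (Fin d) (Fin d) ℝ) (t : ℝ)
    (x : EuclideanSpace ℝ (Fin d)) : EuclideanSpace ℝ (Fin d) :=
  WithLp.toLp 2 (Matrix.mulVec (NormedSpace.exp (t • S)) x)

/-- The scalar complex Ornstein--Uhlenbeck kernel. -/
noncomputable def ouH (d : ℕ) (α δ : ℂ) (S : Matrix (Fin d) (Fin d) ℝ)
    (x ξ : EuclideanSpace ℝ (Fin d)) (t : ℝ) : ℂ :=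
  (4 * (Real.pi : ℂ) * α * t) ^ (-(d : ℂ) / 2) *
    Complex.exp (-(δ * t) - ((‖ouRot d S t x - ξ‖ ^ 2 : ℝ) : ℂ) / (4 * α * t))

/-- `I_m(μ) = (2/Γ(d/2)) ∫_0^∞ s^m e^{-s² + 2√μ s} ds`. -/
noncomputable def ouI (d m : ℕ) (μ : ℝ) : ℝ :=
  (2 / Real.Gamma ((d : ℝ) / 2)) *
    ∫ s in Set.Ioi (0 : ℝ), s ^ m * Real.exp (-s ^ 2 + 2 * Real.sqrt μ * s)

/-- The exponentially weighted `L^p` norm `‖v‖_{L^p_θ} = (∫ (θ(x)|v(x)|)^p dx)^{1/p}`. -/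
noncomputable def wLpNorm (d : ℕ) (p : ℝ) (θ : EuclideanSpace ℝ (Fin d) → ℝ)
    (f : EuclideanSpace ℝ (Fin d) → ℂ) : ENNReal :=
  (∫⁻ x : EuclideanSpace ℝ (Fin d), ENNReal.ofReal ((θ x * ‖f x‖) ^ p)) ^ (1 / p)

open Real Set
open scoped ENNReal

theorem Matrix.exp_mem_unitaryGroup_of_transpose_eq_neg {n : Type*} [Fintype n] [DecidableEq n]
    {A : Matrix n n ℝ} (hA : A.transpose = -A) : NormedSpace.exp A ∈ Matrix.unitaryGroup n ℝ := by
  rw [Matrix.mem_unitaryGroup_iff, Matrix.star_eq_conjTranspose,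
    Matrix.conjTranspose_eq_transpose_of_trivial, ← Matrix.exp_transpose, hA,
    ← Matrix.exp_add_of_commute _ _ (Commute.neg_right (Commute.refl A)), add_neg_cancel,
    NormedSpace.exp_zero]

theorem exists_linearIsometryEquiv_ouRot (d : ℕ) {S : Matrix (Fin d) (Fin d) ℝ}
    (hS : S.transpose = -S) (t : ℝ) :
    ∃ e : EuclideanSpace ℝ (Fin d) ≃ₗᵢ[ℝ] EuclideanSpace ℝ (Fin d), ⇑e = ouRot d S t := by
  have hU := Unitary.map_mem (Matrix.toEuclideanCLM (n := Fin d) (𝕜 := ℝ))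
    (Matrix.exp_mem_unitaryGroup_of_transpose_eq_neg (A := t • S)
      (by rw [Matrix.transpose_smul, hS, smul_neg]))
  exact ⟨Unitary.linearIsometryEquiv ⟨_, hU⟩, rfl⟩

theorem le_mul_exp_norm_ouRot_sub {d : ℕ} {S : Matrix (Fin d) (Fin d) ℝ} (hS : S.transpose = -S)
    {θ : EuclideanSpace ℝ (Fin d) → ℝ} {Cθ η : ℝ}
    (hθgrowth : ∀ x y, θ (x + y) ≤ Cθ * θ x * exp (η * ‖y‖))
    (hθrad : ∃ φ : ℝ → ℝ, ∀ x, θ x = φ ‖x‖) (t : ℝ) (x ξ : EuclideanSpace ℝ (Fin d)) :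
    θ x ≤ Cθ * θ ξ * exp (η * ‖ouRot d S t x - ξ‖) := by
  obtain ⟨e, he⟩ := exists_linearIsometryEquiv_ouRot d hS t
  obtain ⟨φ, hφ⟩ := hθrad
  simpa [hφ, ← he] using hθgrowth ξ (e x - ξ)

/-- Hölder's inequality for the measure `f • μ`. -/
theorem ENNReal.rpow_lintegral_mul_le {X : Type*} [MeasurableSpace X] {μ : Measure X} {p : ℝ}
    (hp : 1 ≤ p) {f g : X → ℝ≥0∞} (hf : AEMeasurable f μ) (hg : AEMeasurable g μ) :
    (∫⁻ x, f x * g x ∂μ) ^ p ≤ (∫⁻ x, f x ∂μ) ^ (p - 1) * ∫⁻ x, f x * g x ^ p ∂μ := by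
  have hp0 : 0 < p := one_pos.trans_le hp
  have hq : 0 ≤ 1 - 1 / p := by simp [inv_le_one_of_one_le₀ hp]
  have hsplit : ∀ x, f x * g x = f x ^ (1 - 1 / p) * (f x * g x ^ p) ^ (1 / p) := fun x => by
    rw [ENNReal.mul_rpow_of_nonneg _ _ (by positivity), ← ENNReal.rpow_mul,
      mul_one_div_cancel hp0.ne', ENNReal.rpow_one, ← mul_assoc,
      ← ENNReal.rpow_add_of_nonneg _ _ hq (by positivity), sub_add_cancel, ENNReal.rpow_one]
  calc (∫⁻ x, f x * g x ∂μ) ^ p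
      ≤ ((∫⁻ x, f x ∂μ) ^ (1 - 1 / p) * (∫⁻ x, f x * g x ^ p ∂μ) ^ (1 / p)) ^ p := by
        refine ENNReal.rpow_le_rpow ?_ hp0.le
        rw [lintegral_congr hsplit]
        exact ENNReal.lintegral_mul_norm_pow_le hf (hf.mul (hg.pow_const p)) hq (by positivity)
          (sub_add_cancel 1 (1 / p))
    _ = (∫⁻ x, f x ∂μ) ^ (p - 1) * ∫⁻ x, f x * g x ^ p ∂μ := by
        rw [ENNReal.mul_rpow_of_nonneg _ _ hp0.le, ← ENNReal.rpow_mul, ← ENNReal.rpow_mul,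
          one_div_mul_cancel hp0.ne', ENNReal.rpow_one, sub_mul, one_mul,
          one_div_mul_cancel hp0.ne']

/-- Young's convolution inequality for the kernel `f h`, via Hölder for the measure
`f (x - y) dy`. -/
theorem lintegral_rpow_lintegral_sub_mul_le {G : Type*} [AddGroup G] [MeasurableSpace G]
    [MeasurableAdd₂ G] [MeasurableNeg G] (μ : Measure G) [SFinite μ] [μ.IsAddLeftInvariant]
    [μ.IsAddRightInvariant] [μ.IsNegInvariant] {p : ℝ} (hp : 1 ≤ p) {f h w : G → ℝ≥0∞}
    (hf : Measurable f) (hh : Measurable h) (hw : Measurable w) :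
    ∫⁻ x, (∫⁻ y, f (x - y) * h (x - y) * w y ∂μ) ^ p ∂μ
      ≤ (∫⁻ z, f z ∂μ) ^ (p - 1) * (∫⁻ z, f z * h z ^ p ∂μ) * ∫⁻ y, w y ^ p ∂μ := by
  have hp0 : 0 ≤ p := zero_le_one.trans hp
  have hF : Measurable (Function.uncurry fun x y => f (x - y) * h (x - y) ^ p * w y ^ p) :=
    ((hf.comp measurable_sub).mul ((hh.comp measurable_sub).pow_const p)).mul
      ((hw.comp measurable_snd).pow_const p)
  calc ∫⁻ x, (∫⁻ y, f (x - y) * h (x - y) * w y ∂μ) ^ p ∂μ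
      ≤ ∫⁻ x, (∫⁻ y, f (x - y) ∂μ) ^ (p - 1) *
          ∫⁻ y, f (x - y) * (h (x - y) * w y) ^ p ∂μ ∂μ := by
        refine lintegral_mono fun x => ?_
        simp_rw [mul_assoc]
        exact ENNReal.rpow_lintegral_mul_le hp (hf.comp (measurable_const_sub x)).aemeasurable
          ((hh.comp (measurable_const_sub x)).mul hw).aemeasurable
    _ = (∫⁻ z, f z ∂μ) ^ (p - 1) * ∫⁻ x, ∫⁻ y, f (x - y) * h (x - y) ^ p * w y ^ p ∂μ ∂μ := by
        simp_rw [lintegral_sub_left_eq_self, ENNReal.mul_rpow_of_nonneg _ _ hp0, ← mul_assoc]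
        exact lintegral_const_mul _ hF.lintegral_prod_right'
    _ = (∫⁻ z, f z ∂μ) ^ (p - 1) * ∫⁻ y, (∫⁻ z, f z * h z ^ p ∂μ) * w y ^ p ∂μ := by
        rw [lintegral_lintegral_swap hF.aemeasurable]
        congr 1
        refine lintegral_congr fun y => ?_
        rw [lintegral_mul_const _ (by fun_prop),
          lintegral_sub_right_eq_self (fun z => f z * h z ^ p)]
    _ = _ := by rw [lintegral_const_mul _ (hw.pow_const p), mul_assoc]

theorem ae_lt_top_of_ofReal_mul_le {X : Type*} [MeasurableSpace X] {μ : Measure X} {p : ℝ}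
    (hp : 0 < p) {θ : X → ℝ} (hθ : ∀ x, 0 < θ x) {F G : X → ℝ≥0∞} (hG : AEMeasurable G μ)
    (hFG : ∀ x, ENNReal.ofReal (θ x) * F x ≤ G x) (hGp : ∫⁻ x, G x ^ p ∂μ ≠ ⊤) :
    ∀ᵐ x ∂μ, F x < ⊤ := by
  filter_upwards [ae_lt_top' (hG.pow_const p) hGp] with x hx
  exact ENNReal.lt_top_of_mul_ne_top_right
    ((hFG x).trans_lt ((ENNReal.rpow_lt_top_iff_of_pos hp).mp hx)).ne
    (ENNReal.ofReal_pos.mpr (hθ x)).ne'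

theorem integral_Ioi_pow_mul_exp_neg_mul_sq_add_mul {c : ℝ} (hc : 0 < c) (k : ℝ) (n : ℕ) :
    ∫ y in Ioi (0 : ℝ), y ^ n * exp (-(c * y ^ 2) + k * y)
      = (√c)⁻¹ ^ (n + 1) * ∫ s in Ioi (0 : ℝ), s ^ n * exp (-s ^ 2 + k / √c * s) := by
  have hsc : 0 < √c := sqrt_pos.mpr hc
  have h := integral_comp_mul_left_Ioi (fun y => y ^ n * exp (-(c * y ^ 2) + k * y)) 0
    (inv_pos.mpr hsc)
  have hscale : ∀ s ∈ Ioi (0 : ℝ), ((√c)⁻¹ * s) ^ n * exp (-(c * ((√c)⁻¹ * s) ^ 2)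
      + k * ((√c)⁻¹ * s)) = (√c)⁻¹ ^ n * (s ^ n * exp (-s ^ 2 + k / √c * s)) := by
    intro s _
    have : c * ((√c)⁻¹ * s) ^ 2 = s ^ 2 := by
      rw [mul_pow, inv_pow, sq_sqrt hc.le]; field_simp
    rw [mul_pow, this]; ring_nf
  rw [mul_zero, inv_inv, smul_eq_mul, setIntegral_congr_fun measurableSet_Ioi hscale,
    integral_const_mul] at h
  rw [pow_succ, mul_assoc, mul_left_comm, h, ← mul_assoc, inv_mul_cancel₀ hsc.ne', one_mul]

theorem integral_exp_neg_mul_sq_norm_add_mul_norm {d : ℕ} (hd : 1 ≤ d) {c k : ℝ} (hc : 0 < c)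
    (hk : 0 ≤ k) :
    ∫ z : EuclideanSpace ℝ (Fin d), exp (-(c * ‖z‖ ^ 2) + k * ‖z‖)
      = (π / c) ^ ((d : ℝ) / 2) * ouI d (d - 1) (k ^ 2 / (4 * c)) := by
  have : Nonempty (Fin d) := ⟨⟨0, hd⟩⟩
  have hsqrt : 2 * √(k ^ 2 / (4 * c)) = k / √c := by
    rw [show k ^ 2 / (4 * c) = (k / (2 * √c)) ^ 2 by rw [div_pow, mul_pow, sq_sqrt hc.le]; ring,
      sqrt_sq (by positivity)]
    field_simp
  have hpow : (π / c) ^ ((d : ℝ) / 2) = (√π * (√c)⁻¹) ^ d := by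
    rw [← div_eq_mul_inv, ← sqrt_div' _ hc.le, sqrt_eq_rpow, ← rpow_natCast,
      ← rpow_mul (by positivity)]
    ring_nf
  have hΓ : Gamma ((d : ℝ) / 2 + 1) = (d : ℝ) / 2 * Gamma ((d : ℝ) / 2) :=
    Gamma_add_one (by positivity)
  have hΓpos : 0 < Gamma ((d : ℝ) / 2) := Gamma_pos_of_pos (by positivity)
  rw [integral_fun_norm_addHaar volume (fun r => exp (-(c * r ^ 2) + k * r)),
    finrank_euclideanSpace_fin, measureReal_def, EuclideanSpace.volume_ball, ouI, hsqrt]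
  simp only [Fintype.card_fin, ENNReal.ofReal_one, one_pow, one_mul, nsmul_eq_mul, smul_eq_mul]
  rw [integral_Ioi_pow_mul_exp_neg_mul_sq_add_mul hc, Nat.sub_add_cancel hd,
    ENNReal.toReal_ofReal (by positivity), hpow, hΓ, mul_pow]
  field_simp

theorem integrable_exp_neg_mul_sq_norm_add_mul_norm (d : ℕ) {c : ℝ} (hc : 0 < c) (k : ℝ) :
    Integrable fun z : EuclideanSpace ℝ (Fin d) => exp (-(c * ‖z‖ ^ 2) + k * ‖z‖) := by
  have hgauss : Integrable fun z : EuclideanSpace ℝ (Fin d) => exp (-(c / 2) * ‖z‖ ^ 2) :=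
    Integrable.of_integral_ne_zero <| by
      rw [GaussianFourier.integral_rexp_neg_mul_sq_norm (half_pos hc)]; positivity
  refine (hgauss.const_mul (exp (k ^ 2 / (2 * c)))).mono' (by fun_prop)
    (Filter.Eventually.of_forall fun z => ?_)
  rw [norm_of_nonneg (exp_pos _).le, ← exp_add, exp_le_exp]
  have hsq : 0 ≤ (c * ‖z‖ - k) ^ 2 / (2 * c) := by positivity
  have : (c * ‖z‖ - k) ^ 2 / (2 * c) = c / 2 * ‖z‖ ^ 2 - k * ‖z‖ + k ^ 2 / (2 * c) := by
    field_simp; ring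
  linarith

theorem lintegral_ofReal_mul_exp_neg_mul_sq_norm_add_mul_norm {d : ℕ} (hd : 1 ≤ d) {c k : ℝ}
    (hc : 0 < c) (hk : 0 ≤ k) {B : ℝ} (hB : 0 ≤ B) :
    ∫⁻ z : EuclideanSpace ℝ (Fin d), ENNReal.ofReal (B * exp (-(c * ‖z‖ ^ 2) + k * ‖z‖))
      = ENNReal.ofReal (B * (π / c) ^ ((d : ℝ) / 2) * ouI d (d - 1) (k ^ 2 / (4 * c))) := by
  rw [mul_assoc, ← integral_exp_neg_mul_sq_norm_add_mul_norm hd hc hk, ← integral_const_mul,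
    ofReal_integral_eq_lintegral_ofReal
      ((integrable_exp_neg_mul_sq_norm_add_mul_norm d hc k).const_mul B)
      (Filter.Eventually.of_forall fun z => by positivity)]

theorem ouI_pred_zero {d : ℕ} (hd : 1 ≤ d) : ouI d (d - 1) 0 = 1 := by
  -- compare the case `c = 1`, `k = 0` of the polar-coordinate formula with `∫ e^{-|z|²} = π^{d/2}`
  have h := integral_exp_neg_mul_sq_norm_add_mul_norm hd one_pos le_rfl
  have hgauss := GaussianFourier.integral_rexp_neg_mul_sq_norm
    (V := EuclideanSpace ℝ (Fin d)) one_pos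
  simp only [finrank_euclideanSpace_fin, neg_mul, one_mul, zero_mul, add_zero] at h hgauss
  rw [hgauss, div_one, zero_pow two_ne_zero, zero_div] at h
  exact (mul_eq_left₀ (by positivity)).mp h.symm

theorem ouI_nonneg (d m : ℕ) (μ : ℝ) : 0 ≤ ouI d m μ :=
  mul_nonneg (div_nonneg zero_le_two (Gamma_nonneg_of_nonneg (by positivity)))
    (setIntegral_nonneg measurableSet_Ioi fun s (hs : 0 < s) => by positivity)

theorem lintegral_rpow_lintegral_gaussian_mul_le {d : ℕ} (hd : 1 ≤ d) {c B η p : ℝ} (hc : 0 < c)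
    (hB : 0 < B) (hη : 0 ≤ η) (hp : 1 ≤ p) {w : EuclideanSpace ℝ (Fin d) → ℝ≥0∞}
    (hw : Measurable w) :
    ∫⁻ y, (∫⁻ ξ, ENNReal.ofReal (B * exp (-(c * ‖y - ξ‖ ^ 2))) *
        ENNReal.ofReal (exp (η * ‖y - ξ‖)) * w ξ) ^ p
      ≤ ENNReal.ofReal ((B * (π / c) ^ ((d : ℝ) / 2) *
          ouI d (d - 1) ((p * η) ^ 2 / (4 * c)) ^ (1 / p)) ^ p) * ∫⁻ ξ, w ξ ^ p := by
  have hp0 : 0 < p := one_pos.trans_le hp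
  refine (lintegral_rpow_lintegral_sub_mul_le volume hp
    (f := fun z => ENNReal.ofReal (B * exp (-(c * ‖z‖ ^ 2))))
    (h := fun z => ENNReal.ofReal (exp (η * ‖z‖))) (by fun_prop) (by fun_prop) hw).trans_eq ?_
  have hmass : ∫⁻ z : EuclideanSpace ℝ (Fin d), ENNReal.ofReal (B * exp (-(c * ‖z‖ ^ 2)))
      = ENNReal.ofReal (B * (π / c) ^ ((d : ℝ) / 2)) := by
    simpa [ouI_pred_zero hd] using
      lintegral_ofReal_mul_exp_neg_mul_sq_norm_add_mul_norm hd hc le_rfl hB.le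
  have hmoment : ∫⁻ z : EuclideanSpace ℝ (Fin d), ENNReal.ofReal (B * exp (-(c * ‖z‖ ^ 2))) *
        ENNReal.ofReal (exp (η * ‖z‖)) ^ p
      = ENNReal.ofReal (B * (π / c) ^ ((d : ℝ) / 2) * ouI d (d - 1) ((p * η) ^ 2 / (4 * c))) := by
    rw [← lintegral_ofReal_mul_exp_neg_mul_sq_norm_add_mul_norm hd hc (by positivity) hB.le]
    refine lintegral_congr fun z => ?_
    rw [ENNReal.ofReal_rpow_of_nonneg (exp_pos _).le hp0.le, ← ENNReal.ofReal_mul (by positivity),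
      ← exp_mul, mul_assoc, ← exp_add]
    ring_nf
  have hM : 0 < B * (π / c) ^ ((d : ℝ) / 2) := by positivity
  have hI := ouI_nonneg d (d - 1) ((p * η) ^ 2 / (4 * c))
  rw [hmass, hmoment, ENNReal.ofReal_rpow_of_nonneg hM.le (by linarith),
    ← ENNReal.ofReal_mul (by positivity), mul_rpow hM.le (by positivity), ← rpow_mul hI,
    one_div_mul_cancel hp0.ne', rpow_one, ← mul_assoc, ← rpow_add_one hM.ne', sub_add_cancel]

noncomputable def ouDecay (α : ℂ) (t : ℝ) : ℝ := α.re / (4 * ‖α‖ ^ 2 * t)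

noncomputable def ouNormConst (d : ℕ) (α δ : ℂ) (t : ℝ) : ℝ :=
  (4 * π * ‖α‖ * t) ^ (-(d : ℝ) / 2) * exp (-(δ.re * t))

theorem continuous_ouH (d : ℕ) (α δ : ℂ) (S : Matrix (Fin d) (Fin d) ℝ)
    (x : EuclideanSpace ℝ (Fin d)) (t : ℝ) : Continuous fun ξ => ouH d α δ S x ξ t := by
  unfold ouH; fun_prop

theorem norm_ouH {d : ℕ} {α : ℂ} (hα : α ≠ 0) (δ : ℂ) (S : Matrix (Fin d) (Fin d) ℝ)
    (x ξ : EuclideanSpace ℝ (Fin d)) {t : ℝ} (ht : 0 < t) :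
    ‖ouH d α δ S x ξ t‖
      = ouNormConst d α δ t * exp (-(ouDecay α t * ‖ouRot d S t x - ξ‖ ^ 2)) := by
  have hz : 4 * (π : ℂ) * α * t ≠ 0 :=
    mul_ne_zero (mul_ne_zero (mul_ne_zero (by norm_num) (by exact_mod_cast pi_ne_zero)) hα)
      (by exact_mod_cast ht.ne')
  have hnorm : ‖4 * (π : ℂ) * α * t‖ = 4 * π * ‖α‖ * t := by
    simp [abs_of_pos pi_pos, abs_of_pos ht]
  have hre : (((‖ouRot d S t x - ξ‖ ^ 2 : ℝ) : ℂ) / (4 * α * t)).re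
      = ouDecay α t * ‖ouRot d S t x - ξ‖ ^ 2 := by
    rw [div_eq_mul_inv, Complex.re_ofReal_mul, Complex.inv_re, ouDecay, Complex.normSq_eq_norm_sq]
    simp only [Complex.mul_re, Complex.re_ofNat, Complex.im_ofNat, zero_mul, sub_zero,
      Complex.ofReal_re, Complex.mul_im, add_zero, Complex.ofReal_im, mul_zero, Complex.norm_mul,
      Complex.norm_ofNat, Complex.norm_real, norm_eq_abs, abs_of_pos ht]
    field_simp
  rw [ouH, norm_mul, Complex.norm_cpow_of_ne_zero hz, hnorm, Complex.norm_exp, Complex.sub_re,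
    hre, ouNormConst]
  simp [Complex.mul_re, sub_eq_add_neg, exp_add, mul_assoc]

theorem sq_div_four_mul_ouDecay (α : ℂ) (t k : ℝ) :
    k ^ 2 / (4 * ouDecay α t) = ‖α‖ ^ 2 * k ^ 2 / α.re * t := by
  simp only [ouDecay, div_eq_mul_inv, mul_inv, inv_inv]; ring

theorem ouNormConst_mul_rpow {d : ℕ} {α : ℂ} (hα : 0 < α.re) (δ : ℂ) {t : ℝ} (ht : 0 < t) :
    ouNormConst d α δ t * (π / ouDecay α t) ^ ((d : ℝ) / 2)
      = (‖α‖ / α.re) ^ ((d : ℝ) / 2) * exp (-δ.re * t) := by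
  have hα' : 0 < ‖α‖ := norm_pos_iff.mpr fun h => by simp [h] at hα
  have hsplit : π / ouDecay α t = (4 * π * ‖α‖ * t) * (‖α‖ / α.re) := by
    rw [ouDecay]; field_simp
  have hX : 0 < (4 * π * ‖α‖ * t) ^ ((d : ℝ) / 2) := by positivity
  rw [hsplit, mul_rpow (by positivity) (by positivity), ouNormConst, neg_div,
    rpow_neg (by positivity), neg_mul]
  generalize (4 * π * ‖α‖ * t) ^ ((d : ℝ) / 2) = X at hX ⊢
  field_simp

theorem ofReal_mul_lintegral_enorm_ouH_mul_le {d : ℕ} {α : ℂ} (hα : α ≠ 0) (δ : ℂ)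
    (S : Matrix (Fin d) (Fin d) ℝ) {t : ℝ} (ht : 0 < t) {θ : EuclideanSpace ℝ (Fin d) → ℝ}
    {Cθ η : ℝ} (hθ : ∀ ξ, 0 ≤ θ ξ) {x : EuclideanSpace ℝ (Fin d)}
    (hθx : ∀ ξ, θ x ≤ Cθ * θ ξ * exp (η * ‖ouRot d S t x - ξ‖))
    (v : EuclideanSpace ℝ (Fin d) → ℂ) :
    ENNReal.ofReal (θ x) * ∫⁻ ξ, ‖ouH d α δ S x ξ t * v ξ‖ₑ
      ≤ ∫⁻ ξ, ENNReal.ofReal (Cθ * ouNormConst d α δ t *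
            exp (-(ouDecay α t * ‖ouRot d S t x - ξ‖ ^ 2))) *
          ENNReal.ofReal (exp (η * ‖ouRot d S t x - ξ‖)) * ENNReal.ofReal (θ ξ * ‖v ξ‖) := by
  have hN : 0 ≤ ouNormConst d α δ t := by unfold ouNormConst; positivity
  rw [← lintegral_const_mul' _ _ ENNReal.ofReal_ne_top]
  refine lintegral_mono fun ξ => ?_
  have hθξ := hθ ξ
  rw [← ofReal_norm, ← ENNReal.ofReal_mul (hθ x), ← ENNReal.ofReal_mul' (exp_pos _).le,
    ← ENNReal.ofReal_mul' (by positivity), norm_mul, norm_ouH hα δ S x ξ ht]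
  refine ENNReal.ofReal_le_ofReal ?_
  calc θ x * (ouNormConst d α δ t * exp (-(ouDecay α t * ‖ouRot d S t x - ξ‖ ^ 2)) * ‖v ξ‖)
      ≤ Cθ * θ ξ * exp (η * ‖ouRot d S t x - ξ‖) *
          (ouNormConst d α δ t * exp (-(ouDecay α t * ‖ouRot d S t x - ξ‖ ^ 2)) * ‖v ξ‖) :=
        mul_le_mul_of_nonneg_right (hθx ξ) (by positivity)
    _ = _ := by ring

theorem lintegral_rpow_lintegral_ouKernel_le {d : ℕ} (hd : 1 ≤ d) {α : ℂ} (hα : 0 < α.re)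
    (δ : ℂ) {t : ℝ} (ht : 0 < t) {Cθ η p : ℝ} (hCθ : 0 < Cθ) (hη : 0 ≤ η) (hp : 1 ≤ p)
    {w : EuclideanSpace ℝ (Fin d) → ℝ≥0∞} (hw : Measurable w) :
    ∫⁻ y, (∫⁻ ξ, ENNReal.ofReal (Cθ * ouNormConst d α δ t *
          exp (-(ouDecay α t * ‖y - ξ‖ ^ 2))) * ENNReal.ofReal (exp (η * ‖y - ξ‖)) * w ξ) ^ p
      ≤ ENNReal.ofReal ((Cθ * (‖α‖ / α.re) ^ ((d : ℝ) / 2) * exp (-δ.re * t) *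
          ouI d (d - 1) (‖α‖ ^ 2 * η ^ 2 * p ^ 2 / α.re * t) ^ (1 / p)) ^ p) *
        ∫⁻ ξ, w ξ ^ p := by
  have hα' : 0 < ‖α‖ := norm_pos_iff.mpr fun h => by simp [h] at hα
  have hc : 0 < ouDecay α t := div_pos hα (by positivity)
  have hB : 0 < Cθ * ouNormConst d α δ t := mul_pos hCθ (by unfold ouNormConst; positivity)
  have hconst : Cθ * ouNormConst d α δ t * (π / ouDecay α t) ^ ((d : ℝ) / 2)
      = Cθ * (‖α‖ / α.re) ^ ((d : ℝ) / 2) * exp (-δ.re * t) := by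
    rw [mul_assoc Cθ, ouNormConst_mul_rpow hα δ ht, mul_assoc]
  have hν : (p * η) ^ 2 / (4 * ouDecay α t) = ‖α‖ ^ 2 * η ^ 2 * p ^ 2 / α.re * t := by
    rw [sq_div_four_mul_ouDecay]; ring
  simpa only [hconst, hν] using lintegral_rpow_lintegral_gaussian_mul_le hd hc hB hη hp hw

theorem wLpNorm_rpow_eq {d : ℕ} {p : ℝ} (hp : 0 < p) {θ : EuclideanSpace ℝ (Fin d) → ℝ}
    (hθ : ∀ x, 0 ≤ θ x) (f : EuclideanSpace ℝ (Fin d) → ℂ) :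
    wLpNorm d p θ f ^ p = ∫⁻ x, ENNReal.ofReal (θ x * ‖f x‖) ^ p := by
  rw [wLpNorm, ← ENNReal.rpow_mul, one_div_mul_cancel hp.ne', ENNReal.rpow_one]
  exact lintegral_congr fun x =>
    (ENNReal.ofReal_rpow_of_nonneg (mul_nonneg (hθ x) (norm_nonneg _)) hp.le).symm

theorem wLpNorm_le_ofReal_mul {d : ℕ} {p : ℝ} (hp : 0 < p) {θ : EuclideanSpace ℝ (Fin d) → ℝ}
    (hθ : ∀ x, 0 ≤ θ x) {C : ℝ} (hC : 0 ≤ C) {f g : EuclideanSpace ℝ (Fin d) → ℂ}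
    (h : ∫⁻ x, ENNReal.ofReal (θ x * ‖f x‖) ^ p ≤ ENNReal.ofReal (C ^ p) * wLpNorm d p θ g ^ p) :
    wLpNorm d p θ f ≤ ENNReal.ofReal C * wLpNorm d p θ g := by
  rwa [← ENNReal.rpow_le_rpow_iff hp, ENNReal.mul_rpow_of_nonneg _ _ hp.le,
    ENNReal.ofReal_rpow_of_nonneg hC hp.le, wLpNorm_rpow_eq hp hθ]

/-- boundedness of the Ornstein--Uhlenbeck semigroup on `L^p_θ`. -/
theorem ouSemigroup_Lp_theta_bounded
    (d : ℕ) (hd : 1 ≤ d) (α δ : ℂ) (hα : 0 < α.re)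
    (S : Matrix (Fin d) (Fin d) ℝ) (hS : S.transpose = -S)
    (p : ℝ) (hp : 1 ≤ p)
    (θ : EuclideanSpace ℝ (Fin d) → ℝ) (η Cθ : ℝ) (hη : 0 ≤ η) (hCθ : 0 < Cθ)
    (hθc : Continuous θ) (hθpos : ∀ x, 0 < θ x)
    (hθgrowth : ∀ x y, θ (x + y) ≤ Cθ * θ x * Real.exp (η * ‖y‖))
    (hθrad : ∃ φ : ℝ → ℝ, ∀ x, θ x = φ ‖x‖)
    (t : ℝ) (ht : 0 < t)
    (v : EuclideanSpace ℝ (Fin d) → ℂ) (hv : Measurable v)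
    (hvfin : wLpNorm d p θ v < ⊤) :
    (∀ᵐ x : EuclideanSpace ℝ (Fin d),
        Integrable (fun ξ : EuclideanSpace ℝ (Fin d) => ouH d α δ S x ξ t * v ξ)) ∧
    wLpNorm d p θ (fun x => ∫ ξ : EuclideanSpace ℝ (Fin d), ouH d α δ S x ξ t * v ξ)
      ≤ ENNReal.ofReal
          (Cθ * (‖α‖ / α.re) ^ ((d : ℝ) / 2) * Real.exp (-δ.re * t) *
            (ouI d (d - 1) ((‖α‖ ^ 2 * η ^ 2 * p ^ 2 / α.re) * t)) ^ (1 / p))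
        * wLpNorm d p θ v := by
  obtain ⟨e, he⟩ := exists_linearIsometryEquiv_ouRot d hS t
  have hp0 : 0 < p := one_pos.trans_le hp
  have hθ0 : ∀ x, 0 ≤ θ x := fun x => (hθpos x).le
  set A : EuclideanSpace ℝ (Fin d) → ℝ≥0∞ := fun y => ∫⁻ ξ,
    ENNReal.ofReal (Cθ * ouNormConst d α δ t * exp (-(ouDecay α t * ‖y - ξ‖ ^ 2))) *
      ENNReal.ofReal (exp (η * ‖y - ξ‖)) * ENNReal.ofReal (θ ξ * ‖v ξ‖)
  have hpt : ∀ x, ENNReal.ofReal (θ x) * ∫⁻ ξ, ‖ouH d α δ S x ξ t * v ξ‖ₑ ≤ A (e x) := fun x => by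
    rw [he]
    exact ofReal_mul_lintegral_enorm_ouH_mul_le (fun h => by simp [h] at hα) δ S ht hθ0
      (le_mul_exp_norm_ouRot_sub hS hθgrowth hθrad t x) v
  set C := Cθ * (‖α‖ / α.re) ^ ((d : ℝ) / 2) * Real.exp (-δ.re * t) *
    (ouI d (d - 1) ((‖α‖ ^ 2 * η ^ 2 * p ^ 2 / α.re) * t)) ^ (1 / p)
  have hA : ∫⁻ x, A (e x) ^ p ≤ ENNReal.ofReal (C ^ p) * wLpNorm d p θ v ^ p := by
    rw [e.measurePreserving.lintegral_comp_emb e.toHomeomorph.measurableEmbedding (A · ^ p),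
      wLpNorm_rpow_eq hp0 hθ0]
    exact lintegral_rpow_lintegral_ouKernel_le hd hα δ ht hCθ hη hp
      (hθc.measurable.mul hv.norm).ennreal_ofReal
  have hfin : ∀ᵐ x, ∫⁻ ξ, ‖ouH d α δ S x ξ t * v ξ‖ₑ < ⊤ :=
    ae_lt_top_of_ofReal_mul_le hp0 hθpos (by fun_prop) hpt <| (hA.trans_lt <|
      ENNReal.mul_lt_top ENNReal.ofReal_lt_top (ENNReal.rpow_lt_top_of_nonneg hp0.le hvfin.ne)).ne
  refine ⟨hfin.mono fun x hx =>
    ⟨(continuous_ouH d α δ S x t).aestronglyMeasurable.mul hv.aestronglyMeasurable, hx⟩, ?_⟩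
  refine wLpNorm_le_ofReal_mul hp0 hθ0
    (mul_nonneg (by positivity) (rpow_nonneg (ouI_nonneg _ _ _) _))
    ((lintegral_mono fun x => ENNReal.rpow_le_rpow (le_trans ?_ (hpt x)) hp0.le).trans hA)
  rw [ENNReal.ofReal_mul (hθ0 x), ofReal_norm]
  gcongr
  exact enorm_integral_le_lintegral_enorm _
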